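/- The inversion formula for combinatorial Lucas polynomials: for all n, \sum_{k=0}^{\lfloor n/2 \rfloor} (-s)^k \binom{n}{k} l_{n-2k}(x,s) = x^n, where l_0(x,s) = 1, l_1(x,s) = x, and l_n(x,s) = F_{n+1}(x,s) + s F_{n-1}(x,s) for n ≥ 1. -/
import Mathlib
open Polynomial Finset

def fibP {R : Type*} [CommRing R] (x s : R) : ℕ → R
  | 0 => 0
  | 1 => 1
  | n + 2 => x * fibP x s (n + 1) + s * fibP x s n

lemma map_fibP' {R A : Type*} [CommRing R] [CommRing A] (g : R →+* A) (x s : R) :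
    ∀ m, g (fibP x s m) = fibP (g x) (g s) m := by
  intro m
  induction m using Nat.twoStepInduction with
  | zero => simp [fibP]
  | one => simp [fibP]
  | more m ih1 ih2 => simp only [fibP, map_add, map_mul, ih1, ih2]

lemma pow_formula' {A : Type*} [CommRing A] (x' s' c : A) (hc : c ^ 2 = x' * c + s') :
    ∀ m : ℕ, c ^ (m + 1) = fibP x' s' (m + 1) * c + s' * fibP x' s' m := by
  intro m
  induction m using Nat.twoStepInduction with
  | zero => simp [fibP]
  | one => rw [show (1:ℕ)+1 = 2 by rfl, hc]; simp [fibP]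
  | more m ih1 ih2 =>
    have h3 : fibP x' s' (m+2+1) = x' * fibP x' s' (m+2) + s' * fibP x' s' (m+1) := rfl
    calc c ^ (m + 2 + 1) = c ^ (m + 1 + 1) * c := by ring
      _ = (fibP x' s' (m + 2) * c + s' * fibP x' s' (m + 1)) * c := by rw [ih2]
      _ = fibP x' s' (m + 2) * c ^ 2 + s' * fibP x' s' (m + 1) * c := by ring
      _ = fibP x' s' (m + 2) * (x' * c + s') + s' * fibP x' s' (m + 1) * c := by rw [hc]
      _ = (x' * fibP x' s' (m+2) + s' * fibP x' s' (m+1)) * c + s' * fibP x' s' (m + 2) := by ring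
      _ = fibP x' s' (m + 2 + 1) * c + s' * fibP x' s' (m + 2) := by rw [h3]

lemma adjoin_inj' {R : Type*} [CommRing R] [Nontrivial R] (x s : R) :
    Function.Injective (algebraMap R (AdjoinRoot (X^2 - C x * X - C s))) := by
  have hm : (X^2 - C x * X - C s).Monic := by monicity!
  have hdeg : (X^2 - C x * X - C s).degree = 2 := by compute_degree!
  intro a b hab
  have h1 : AdjoinRoot.modByMonicHom hm (AdjoinRoot.mk _ (C a))
      = AdjoinRoot.modByMonicHom hm (AdjoinRoot.mk _ (C b)) := by
    rw [show (AdjoinRoot.mk (X^2 - C x * X - C s)) (C a) = algebraMap R _ a from rfl,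
        show (AdjoinRoot.mk (X^2 - C x * X - C s)) (C b) = algebraMap R _ b from rfl, hab]
  rw [AdjoinRoot.modByMonicHom_mk, AdjoinRoot.modByMonicHom_mk,
    (Polynomial.modByMonic_eq_self_iff hm).mpr, (Polynomial.modByMonic_eq_self_iff hm).mpr] at h1
  · exact C_injective h1
  · rw [hdeg]; exact lt_of_le_of_lt (degree_C_le) (by norm_num)
  · rw [hdeg]; exact lt_of_le_of_lt (degree_C_le) (by norm_num)

lemma sum_split' {M : Type*} [AddCommMonoid M] (h : ℕ → M) (n : ℕ) :
    ∑ j ∈ range (n + 1), h j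
      = ∑ j ∈ range (n / 2 + 1), h j + ∑ j ∈ range (n - n / 2), h (n - j) := by
  have h1 : n / 2 + 1 ≤ n + 1 := by omega
  rw [← Finset.sum_range_add_sum_Ico h h1, Finset.sum_Ico_eq_sum_range]
  congr 1
  have h2 : n + 1 - (n / 2 + 1) = n - n / 2 := by omega
  rw [h2, ← Finset.sum_range_reflect (fun j => h (n / 2 + 1 + j)) (n - n/2)]
  apply Finset.sum_congr rfl
  intro j hj
  simp only [Finset.mem_range] at hj
  congr 1
  omega

theorem lucas_inversion {R : Type*} [CommRing R] (x s : R) (l : ℕ → R)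
    (hl0 : l 0 = 1)
    (hl : ∀ n, 1 ≤ n → l n = fibP x s (n + 1) + s * fibP x s (n - 1)) (n : ℕ) :
    ∑ k ∈ Finset.range (n / 2 + 1), (-s) ^ k * (n.choose k : R) * l (n - 2 * k) = x ^ n := by
  nontriviality R
  apply adjoin_inj' x s
  set f : R →+* AdjoinRoot (X^2 - C x * X - C s) := algebraMap R _ with hf
  set a : AdjoinRoot (X^2 - C x * X - C s) := AdjoinRoot.root _ with ha
  set b : AdjoinRoot (X^2 - C x * X - C s) := f x - a with hb
  have hsum : a + b = f x := by rw [hb]; ring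
  have hroot : a^2 = f x * a + f s := by
    have h0 : (AdjoinRoot.mk (X^2 - C x * X - C s) (X^2 - C x * X - C s)) = 0 :=
      AdjoinRoot.mk_self
    simp only [map_sub, map_pow, map_mul, AdjoinRoot.mk_X, AdjoinRoot.mk_C, ← ha] at h0
    rw [hf, AdjoinRoot.algebraMap_eq]
    linear_combination h0
  have hab : a * b = -(f s) := by rw [hb]; linear_combination -hroot
  have hb2 : b^2 = f x * b + f s := by rw [hb]; linear_combination hroot
  have hA : ∀ m, a^(m+1) = f (fibP x s (m+1)) * a + f s * f (fibP x s m) := by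
    intro m; rw [map_fibP', map_fibP']; exact pow_formula' _ _ _ hroot m
  have hB : ∀ m, b^(m+1) = f (fibP x s (m+1)) * b + f s * f (fibP x s m) := by
    intro m; rw [map_fibP', map_fibP']; exact pow_formula' _ _ _ hb2 m
  have hluc : ∀ m, 1 ≤ m → a^m + b^m = f (l m) := by
    intro m hm1
    obtain ⟨j, rfl⟩ : ∃ j, m = j + 1 := ⟨m - 1, by omega⟩
    rw [hl (j+1) (by omega)]
    simp only [Nat.add_sub_cancel, map_add, map_mul]
    rw [hA j, hB j]
    have hrec : f (fibP x s (j+1+1)) = f x * f (fibP x s (j+1)) + f s * f (fibP x s j) := by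
      rw [show fibP x s (j+1+1) = x * fibP x s (j+1) + s * fibP x s j from rfl, map_add,
        map_mul, map_mul]
    linear_combination (f (fibP x s (j+1))) * hsum - hrec
  -- main computation
  rw [map_sum, map_pow]
  simp only [map_mul, map_pow, map_neg, map_natCast]
  rw [← hsum, add_pow, sum_split' (fun j => a^j * b^(n-j) * (n.choose j : AdjoinRoot (X^2 - C x * X - C s))) n]
  have key : ∀ k ∈ range (n - n/2),
      (-(f s))^k * (n.choose k : AdjoinRoot (X^2 - C x * X - C s)) * f (l (n - 2*k))
        = a^k * b^(n-k) * (n.choose k : AdjoinRoot (X^2 - C x * X - C s))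
          + a^(n-k) * b^(n-(n-k)) * (n.choose (n-k) : AdjoinRoot (X^2 - C x * X - C s)) := by
    intro k hk
    simp only [mem_range] at hk
    have h1 : 1 ≤ n - 2*k := by omega
    have h2 : k ≤ n := by omega
    rw [← hluc _ h1, Nat.choose_symm h2, show n - (n-k) = k by omega, ← hab, mul_pow]
    have e2 : a^k * a^(n-2*k) = a^(n-k) := by rw [← pow_add]; congr 1; omega
    have e3 : b^k * b^(n-2*k) = b^(n-k) := by rw [← pow_add]; congr 1; omega
    linear_combination (b^k * (n.choose k : AdjoinRoot (X^2 - C x * X - C s))) * e2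
      + (a^k * (n.choose k : AdjoinRoot (X^2 - C x * X - C s))) * e3
  rcases Nat.even_or_odd n with ⟨m, rfl⟩ | ⟨m, rfl⟩
  · have hd : (m + m)/2 = m := by omega
    have hd2 : m + m - (m+m)/2 = m := by omega
    rw [hd, hd2] at *
    rw [Finset.sum_range_succ, Finset.sum_range_succ,
      Finset.sum_congr rfl (fun k hk => key k (by simp only [mem_range] at hk ⊢; omega)),
      Finset.sum_add_distrib]
    have hlast : (-(f s))^m * ((m+m).choose m : AdjoinRoot (X^2 - C x * X - C s))
        * f (l (m + m - 2*m))
        = a^m * b^(m+m-m) * ((m+m).choose m : AdjoinRoot (X^2 - C x * X - C s)) := by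
      rw [show m + m - 2*m = 0 by omega, hl0, map_one, mul_one, ← hab, mul_pow,
        show m + m - m = m by omega]
    rw [hlast]
    ring
  · have hd : (2*m+1)/2 = m := by omega
    have hd2 : 2*m+1 - (2*m+1)/2 = m + 1 := by omega
    rw [hd, hd2] at *
    rw [Finset.sum_congr rfl (fun k hk => key k (by simp only [mem_range] at hk ⊢; omega)), Finset.sum_add_distrib]
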